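/- Let (X,d) be a compact metric space and f_{0,∞} = {f_n}_{n=0}^∞ a sequence of continuous self-maps of X. Then (X, f_{0,∞}) is multi-sensitive if and only if the induced system (𝓜(X), f̂_{0,∞}) is multi-sensitive. -/

import Mathlib

open MeasureTheory Filter

/-- `nacomp f n = f_{n-1} ∘ ⋯ ∘ f_0` (with `nacomp f 0 = id`): the time-`n` map of the
non-autonomous system `(X, f_{0,∞})`. -/
def nacomp {Y : Type*} (f : ℕ → Y → Y) : ℕ → Y → Y
  | 0 => id
  | n + 1 => f n ∘ nacomp f n

/-- The induced pushforward map `f̂` on the space `𝓜(X)` of Borel probability measures,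
equipped with the Lévy–Prokhorov metric. -/
noncomputable def inducedMap {X : Type*} [MetricSpace X] [MeasurableSpace X] [BorelSpace X]
    (f : X → X) (hf : Continuous f) :
    LevyProkhorov (ProbabilityMeasure X) → LevyProkhorov (ProbabilityMeasure X) :=
  fun μ => (LevyProkhorov.toMeasureEquiv (α := ProbabilityMeasure X)).symm
    (((LevyProkhorov.toMeasureEquiv (α := ProbabilityMeasure X)) μ).map hf.measurable.aemeasurable)

/-- The set `N(x, ε, δ)` of times `n ≥ 1` at which some point `ε`-close to `x` separates from
`x` by more than `δ` under the non-autonomous dynamics. -/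
def NASensSet {Y : Type*} [PseudoMetricSpace Y] (f : ℕ → Y → Y) (x : Y) (ε δ : ℝ) : Set ℕ :=
  {n : ℕ | 1 ≤ n ∧ ∃ y : Y, dist x y < ε ∧ δ < dist (nacomp f n x) (nacomp f n y)}

/-- Multi-sensitivity: some `δ > 0` works so that for every `ε > 0` and finitely many points,
the sets `N(x_i, ε, δ)` have a common element. -/
def NAMultiSensitive {Y : Type*} [PseudoMetricSpace Y] (f : ℕ → Y → Y) : Prop :=
  ∃ δ : ℝ, 0 < δ ∧ ∀ ε : ℝ, 0 < ε → ∀ k, 1 ≤ k → ∀ x : Fin k → Y,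
    (⋂ i, NASensSet f (x i) ε δ).Nonempty


/-!
Backward direction: a measure `ν` that is `ε`-close to `δ_x` has mass `≥ 1 - ε` on `ball x ε`;
if every point of that ball stayed `δ`-close to `x` at time `n`, the image of `ν` would be
`δ`-close to `δ_{f_0^n x}`. So multi-sensitivity at Dirac masses gives it at points.

Forward direction: push each measure `μ` forward under a measurable map snapping `X` onto a
finite `ε/3`-net `a`, and apply multi-sensitivity of `X` to the net: at a common time `n` each
`a j` has an `ε/3`-close partner `y j` that is `δ`-separated from it. Moving to their partners
the net points whose partners land near one point `z` of a fixed `δ/4`-net of size `K` (a class of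
mass `≥ 1/K` by pigeonhole) gives a second measure `ε`-close to `μ`. The moved mass enters a ball
around `z` that the unmoved mass cannot reach, and pigeonholing over `2(K+1)` concentric shells
finds such a ball whose boundary shell carries little mass; hence the two images at time `n` are
at Lévy–Prokhorov distance `≥ min δ 1 / (4(K+1))`, a constant depending only on `δ` and `X`
(the `+ 1` keeps it positive when `X` is empty). One of the two is then more than a third of that
constant away from the image of `μ`.
-/

open Metric Set

section LevyProkhorovDist

variable {X : Type*} [PseudoMetricSpace X] [MeasurableSpace X]

lemma levyProkhorovDist_map_le_of_dist_le [OpensMeasurableSpace X] {Ω : Type*}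
    [MeasurableSpace Ω] (P : Measure Ω) [IsProbabilityMeasure P] {u v : Ω → X}
    (hu : Measurable u) (hv : Measurable v) {ρ : ℝ} (hρ : 0 ≤ ρ)
    (h : ∀ ω, dist (u ω) (v ω) ≤ ρ) :
    levyProkhorovDist (P.map u) (P.map v) ≤ ρ := by
  have := Measure.isProbabilityMeasure_map (μ := P) hu.aemeasurable
  have := Measure.isProbabilityMeasure_map (μ := P) hv.aemeasurable
  refine levyProkhorovDist_le_of_forall_le _ _ hρ fun ε B hε hB => le_add_right ?_
  rw [Measure.map_apply hu hB, Measure.map_apply hv isOpen_thickening.measurableSet]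
  exact measure_mono fun ω hω => mem_thickening_iff.2 ⟨u ω, hω, by
    rw [dist_comm]; exact (h ω).trans_lt hε⟩

lemma le_levyProkhorovDist_of_measureReal_thickening_add_lt {μ ν : Measure X}
    [IsProbabilityMeasure μ] [IsProbabilityMeasure ν] {t : ℝ} (ht : 0 ≤ t) {B : Set X}
    (hB : MeasurableSet B) (h : μ.real (thickening t B) + t < ν.real B) :
    t ≤ levyProkhorovDist μ ν := by
  by_contra! hlt
  have hE : levyProkhorovEDist μ ν < ENNReal.ofReal t :=
    (ENNReal.lt_ofReal_iff_toReal_lt (levyProkhorovEDist_ne_top μ ν)).2 hlt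
  have hνB := right_measure_le_of_levyProkhorovEDist_lt hE hB
  rw [ENNReal.toReal_ofReal ht] at hνB
  have := ENNReal.toReal_mono (by finiteness) hνB
  rw [ENNReal.toReal_add (by finiteness) ENNReal.ofReal_ne_top, ENNReal.toReal_ofReal ht] at this
  exact h.not_ge this

lemma one_le_measure_ball_add_of_levyProkhorovDist_dirac_lt [MeasurableSingletonClass X]
    {ν : Measure X} [IsProbabilityMeasure ν] {x : X} {r : ℝ} (hr : 0 < r)
    (h : levyProkhorovDist (Measure.dirac x) ν < r) :
    1 ≤ ν (ball x r) + ENNReal.ofReal r := by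
  have hE : levyProkhorovEDist (Measure.dirac x) ν < ENNReal.ofReal r :=
    (ENNReal.lt_ofReal_iff_toReal_lt (levyProkhorovEDist_ne_top _ _)).2 h
  simpa [ENNReal.toReal_ofReal hr.le, thickening_singleton] using
    left_measure_le_of_levyProkhorovEDist_lt hE (measurableSet_singleton x)

lemma levyProkhorovDist_dirac_le [OpensMeasurableSpace X] {ν : Measure X}
    [IsProbabilityMeasure ν] {x : X} {r : ℝ} (hr : 0 ≤ r)
    (h : 1 ≤ ν (closedBall x r) + ENNReal.ofReal r) :
    levyProkhorovDist (Measure.dirac x) ν ≤ r := by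
  refine levyProkhorovDist_le_of_forall_le _ _ hr fun ε B hε hB => ?_
  by_cases hx : x ∈ B
  · calc Measure.dirac x B ≤ 1 := prob_le_one
      _ ≤ ν (closedBall x r) + ENNReal.ofReal r := h
      _ ≤ ν (thickening ε B) + ENNReal.ofReal ε := by
        gcongr
        exact fun y hy => mem_thickening_iff.2 ⟨x, hx, (mem_closedBall.1 hy).trans_lt hε⟩
  · simp [Measure.dirac_apply' _ hB, hx]

end LevyProkhorovDist

section Separation

variable {X : Type*} [PseudoMetricSpace X] [MeasurableSpace X]

lemma exists_measurable_fin_approx [CompactSpace X] [OpensMeasurableSpace X] {ε : ℝ}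
    (hε : 0 < ε) :
    ∃ (K : ℕ) (c : Fin K → X) (idx : X → Fin K),
      Measurable idx ∧ ∀ x, dist x (c (idx x)) < ε := by
  rcases isEmpty_or_nonempty X with hX | hX
  · exact ⟨0, finZeroElim, isEmptyElim, measurable_of_subsingleton_codomain _, isEmptyElim⟩
  classical
  set e := TopologicalSpace.denseSeq X
  have hcover (x : X) : ∃ n, x ∈ ball (e n) ε :=
    (TopologicalSpace.denseRange_denseSeq X).exists_dist_lt x hε
  obtain ⟨s, hs⟩ := isCompact_univ.elim_finite_subcover (fun n => ball (e n) ε)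
    (fun _ => isOpen_ball) fun x _ => mem_iUnion.2 (hcover x)
  set N := s.sup id
  have hle (x : X) : Nat.find (hcover x) ≤ N := by
    obtain ⟨n, hn, hx⟩ := mem_iUnion₂.1 (hs (mem_univ x))
    exact (Nat.find_min' _ hx).trans (Finset.le_sup (f := id) hn)
  refine ⟨N + 1, fun j => e j, fun x => Fin.ofNat (N + 1) (Nat.find (hcover x)),
    (measurable_from_nat (f := Fin.ofNat (N + 1))).comp
      (measurable_find hcover fun _ => measurableSet_ball), fun x => ?_⟩
  simp only [Fin.val_ofNat]
  rw [Nat.mod_eq_of_lt (Nat.lt_succ_of_le (hle x))]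
  exact Nat.find_spec (hcover x)

lemma exists_inv_card_le_measureReal_preimage_singleton {Ω ι : Type*} [MeasurableSpace Ω]
    [Fintype ι] [MeasurableSpace ι] [MeasurableSingletonClass ι] (P : Measure Ω)
    [IsProbabilityMeasure P] {g : Ω → ι} (hg : Measurable g) :
    ∃ i, (Fintype.card ι : ℝ)⁻¹ ≤ P.real (g ⁻¹' {i}) := by
  have : Nonempty ι := (nonempty_of_isProbabilityMeasure P).map g
  obtain ⟨i, -, hi⟩ := Finset.exists_le_of_sum_le Finset.univ_nonempty
    (f := fun _ => (Fintype.card ι : ℝ)⁻¹)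
    (g := fun i => P.real (g ⁻¹' {i})) (by
      rw [sum_measureReal_preimage_singleton _ fun i _ => hg (measurableSet_singleton i),
        Finset.coe_univ, preimage_univ, probReal_univ, Finset.sum_const, Finset.card_univ,
        nsmul_eq_mul, mul_inv_cancel₀ (by positivity)])
  exact ⟨i, hi⟩

lemma exists_measureReal_thickening_ball_le (m : Measure X) [IsProbabilityMeasure m] (z : X)
    {a b : ℝ} (hab : a ≤ b) {N : ℕ} (hN : 0 < N) :
    ∃ R, a ≤ R ∧ R ≤ b ∧
      m.real (thickening ((b - a) / N) (ball z R)) ≤ m.real (ball z R) + (N : ℝ)⁻¹ := by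
  set γ := (b - a) / N
  have hγ : 0 ≤ γ := div_nonneg (sub_nonneg.2 hab) N.cast_nonneg
  have hNγ : N * γ = b - a := by simp only [γ]; field_simp
  set F : ℕ → ℝ := fun k => m.real (ball z (a + k * γ))
  obtain ⟨k, hk, hle⟩ := Finset.exists_le_of_sum_le (Finset.nonempty_range_iff.2 hN.ne')
    (f := fun k => F (k + 1) - F k) (g := fun _ => (N : ℝ)⁻¹) (by
      rw [Finset.sum_range_sub, Finset.sum_const, Finset.card_range, nsmul_eq_mul,
        mul_inv_cancel₀ (by positivity)]
      have : F N ≤ 1 := measureReal_le_one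
      have : 0 ≤ F 0 := measureReal_nonneg
      linarith)
  have hkN : (k : ℝ) + 1 ≤ N := by exact_mod_cast Finset.mem_range.1 hk
  refine ⟨a + k * γ, by nlinarith [k.cast_nonneg (α := ℝ)], by nlinarith, ?_⟩
  calc m.real (thickening γ (ball z (a + k * γ))) ≤ F (k + 1) := by
        refine measureReal_mono ((Metric.thickening_ball z γ _).trans (ball_subset_ball ?_))
        push_cast
        linarith
    _ ≤ F k + (N : ℝ)⁻¹ := by linarith [show F (k + 1) - F k ≤ (N : ℝ)⁻¹ from hle]

omit [PseudoMetricSpace X] in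
lemma measureReal_add_measureReal_map_le_map_piecewise {Ω : Type*} [MeasurableSpace Ω]
    (P : Measure Ω) [IsFiniteMeasure P] {S : Set Ω} [DecidablePred (· ∈ S)]
    (hS : MeasurableSet S) {u v : Ω → X} (hu : Measurable u) (hv : Measurable v) {B : Set X}
    (hB : MeasurableSet B) (hvB : ∀ ω ∈ S, v ω ∈ B) (huB : ∀ ω ∈ S, u ω ∉ B) :
    P.real S + (P.map u).real B ≤ (P.map (S.piecewise v u)).real B := by
  rw [map_measureReal_apply hu hB, map_measureReal_apply (hv.piecewise hS hu) hB,
    ← measureReal_union (s₂ := u ⁻¹' B)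
      (disjoint_left.2 fun ω hωS hωB => huB ω hωS hωB) (hu hB)]
  refine measureReal_mono fun ω hω => ?_
  by_cases hωS : ω ∈ S
  · simpa [hωS] using hvB ω hωS
  · simpa [hωS] using hω.resolve_left hωS

open Classical in
lemma exists_le_levyProkhorovDist_map_piecewise [OpensMeasurableSpace X] {K : ℕ}
    {c : Fin K → X} {idx : X → Fin K} (hidx : Measurable idx) {δ : ℝ} (hδ : 0 < δ)
    (hc : ∀ x, dist x (c (idx x)) < δ / 4) {Ω : Type*} [MeasurableSpace Ω] (P : Measure Ω)
    [IsProbabilityMeasure P] {u v : Ω → X} (hu : Measurable u) (hv : Measurable v)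
    (huv : ∀ ω, δ < dist (u ω) (v ω)) :
    ∃ S, MeasurableSet S ∧
      min δ 1 / (4 * (K + 1)) ≤ levyProkhorovDist (P.map u) (P.map (S.piecewise v u)) := by
  obtain ⟨i, hi⟩ := exists_inv_card_le_measureReal_preimage_singleton P (hidx.comp hv)
  set S := idx ∘ v ⁻¹' {i}
  have hS : MeasurableSet S := hidx.comp hv (measurableSet_singleton i)
  have hvS (ω) (hω : ω ∈ S) : dist (v ω) (c i) < δ / 4 := by
    simpa [S, show idx (v ω) = i from hω] using hc (v ω)
  have := Measure.isProbabilityMeasure_map (μ := P) hu.aemeasurable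
  have hw : Measurable (S.piecewise v u) := hv.piecewise hS hu
  have := Measure.isProbabilityMeasure_map (μ := P) hw.aemeasurable
  set L : ℝ := K + 1
  have hSL : L⁻¹ ≤ P.real S := by
    refine le_trans (inv_anti₀ (by exact_mod_cast i.pos) ?_) (Fintype.card_fin K ▸ hi)
    simp [L]
  obtain ⟨R, hR₁, hR₂, hshell⟩ := exists_measureReal_thickening_ball_le (P.map u) (c i)
    (a := δ / 4) (b := 3 * δ / 4) (by linarith) (N := 2 * (K + 1)) (by positivity)
  have hmass := measureReal_add_measureReal_map_le_map_piecewise P hS hu hv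
    (B := ball (c i) R) measurableSet_ball
    (fun ω hω => mem_ball.2 ((hvS ω hω).trans_le hR₁))
    (fun ω hω => by
      have := dist_triangle_right (u ω) (v ω) (c i)
      rw [mem_ball, not_lt]
      linarith [huv ω, hvS ω hω])
  have hγ : (3 * δ / 4 - δ / 4) / ((2 * (K + 1) : ℕ) : ℝ) = δ / (4 * L) := by
    simp only [L]; push_cast; field_simp; ring
  rw [hγ] at hshell
  set t := min δ 1 / (4 * L)
  have htγ : t ≤ δ / (4 * L) := div_le_div_of_nonneg_right (min_le_left _ _) (by positivity)
  have ht : t ≤ 1 / (4 * L) := div_le_div_of_nonneg_right (min_le_right _ _) (by positivity)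
  have hthick : (P.map u).real (thickening t (ball (c i) R))
      ≤ (P.map u).real (ball (c i) R) + (2 * L)⁻¹ := by
    refine (measureReal_mono (thickening_mono htγ _)).trans ?_
    simpa [L] using hshell
  have : (2 * L)⁻¹ + 1 / (4 * L) = 3 / 4 * L⁻¹ := by field_simp; ring
  have : 0 < L⁻¹ := by positivity
  exact ⟨S, hS, le_levyProkhorovDist_of_measureReal_thickening_add_lt (by positivity)
    measurableSet_ball (by linarith)⟩

end Separation

section Dynamics

open LevyProkhorov

lemma continuous_nacomp {X : Type*} [TopologicalSpace X] {f : ℕ → X → X}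
    (hf : ∀ n, Continuous (f n)) (n : ℕ) : Continuous (nacomp f n) := by
  induction n with
  | zero => exact continuous_id
  | succ n ih => exact (hf n).comp ih

lemma mem_NASensSet_of_le_dist {Y : Type*} [PseudoMetricSpace Y] {g : ℕ → Y → Y} {x a b : Y}
    {ε t : ℝ} {n : ℕ} (hn : 1 ≤ n) (ha : dist x a < ε) (hb : dist x b < ε)
    (hab : t ≤ dist (nacomp g n a) (nacomp g n b)) (ht : 0 < t) :
    n ∈ NASensSet g x ε (t / 3) := by
  refine ⟨hn, ?_⟩
  by_contra! hclose
  linarith [hclose a ha, hclose b hb,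
    dist_triangle_left (nacomp g n a) (nacomp g n b) (nacomp g n x)]

variable {X : Type*} [MetricSpace X] [MeasurableSpace X] [BorelSpace X]

lemma toMeasure_inducedMap {g : X → X} (hg : Continuous g)
    (p : LevyProkhorov (ProbabilityMeasure X)) :
    ((inducedMap g hg p).toMeasure : Measure X) = (p.toMeasure : Measure X).map g :=
  ProbabilityMeasure.toMeasure_map _ hg.measurable.aemeasurable

lemma toMeasure_nacomp_inducedMap {f : ℕ → X → X} (hf : ∀ n, Continuous (f n)) (n : ℕ)
    (p : LevyProkhorov (ProbabilityMeasure X)) :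
    ((nacomp (fun m => inducedMap (f m) (hf m)) n p).toMeasure : Measure X) =
      (p.toMeasure : Measure X).map (nacomp f n) := by
  induction n with
  | zero => simp [nacomp]
  | succ n ih =>
    rw [nacomp, Function.comp_apply, toMeasure_inducedMap, ih,
      Measure.map_map (hf n).measurable (continuous_nacomp hf n).measurable]
    rfl

theorem NAMultiSensitive.of_induced {f : ℕ → X → X} (hf : ∀ n, Continuous (f n))
    (h : NAMultiSensitive fun n => inducedMap (f n) (hf n)) : NAMultiSensitive f := by
  obtain ⟨δ, hδ, hsens⟩ := h
  refine ⟨δ, hδ, fun ε hε k hk x => ?_⟩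
  obtain ⟨n, hn⟩ :=
    hsens (min ε δ) (lt_min hε hδ) k hk fun i => ofMeasure (diracProba (x i))
  refine ⟨n, mem_iInter.2 fun i => ?_⟩
  obtain ⟨hn1, q, hq, hsep⟩ := mem_iInter.1 hn i
  refine ⟨hn1, ?_⟩
  by_contra! hclose
  have hF := (continuous_nacomp hf n).measurable
  refine hsep.not_ge ?_
  rw [dist_probabilityMeasure_def, toMeasure_nacomp_inducedMap, toMeasure_nacomp_inducedMap]
  simp only [diracProba, ProbabilityMeasure.coe_mk, Measure.map_dirac' hF]
  have := Measure.isProbabilityMeasure_map (μ := (q.toMeasure : Measure X)) hF.aemeasurable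
  refine levyProkhorovDist_dirac_le hδ.le ?_
  calc 1 ≤ (q.toMeasure : Measure X) (ball (x i) (min ε δ)) + ENNReal.ofReal (min ε δ) :=
        one_le_measure_ball_add_of_levyProkhorovDist_dirac_lt (lt_min hε hδ) hq
    _ ≤ _ := by
      gcongr ?_ + ?_
      · rw [Measure.map_apply hF measurableSet_closedBall]
        exact measure_mono fun z hz =>
          mem_closedBall'.2 (hclose z ((mem_ball'.1 hz).trans_le (min_le_left _ _)))
      · exact ENNReal.ofReal_le_ofReal (min_le_right ε δ)

lemma mem_NASensSet_inducedMap {f : ℕ → X → X} (hf : ∀ n, Continuous (f n)) {K : ℕ}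
    {c : Fin K → X} {idx : X → Fin K} (hidx : Measurable idx) {δ : ℝ} (hδ : 0 < δ)
    (hc : ∀ x, dist x (c (idx x)) < δ / 4) {r : ℕ} {a y : Fin r → X} {jdx : X → Fin r}
    (hjdx : Measurable jdx) {ε : ℝ} (hε : 0 < ε) (ha : ∀ x, dist x (a (jdx x)) < ε / 3)
    (hy : ∀ j, dist (a j) (y j) < ε / 3) {n : ℕ} (hn : 1 ≤ n)
    (hsep : ∀ j, δ < dist (nacomp f n (a j)) (nacomp f n (y j)))
    (p : LevyProkhorov (ProbabilityMeasure X)) :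
    n ∈ NASensSet (fun m => inducedMap (f m) (hf m)) p ε (min δ 1 / (4 * (K + 1)) / 3) := by
  classical
  set μ := p.toMeasure
  have hF := (continuous_nacomp hf n).measurable
  have hsnap : Measurable (a ∘ jdx) := (Measurable.of_discrete).comp hjdx
  obtain ⟨S, hS, hsepS⟩ :=
    exists_le_levyProkhorovDist_map_piecewise hidx hδ hc (μ : Measure X) (hF.comp hsnap)
      (hF.comp ((Measurable.of_discrete (f := y)).comp hjdx)) fun x => hsep (jdx x)
  have hmove : Measurable (S.piecewise (y ∘ jdx) (a ∘ jdx)) :=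
    ((Measurable.of_discrete).comp hjdx).piecewise hS hsnap
  have hnear {w : X → X} (hw : Measurable w) (hxw : ∀ x, dist x (w x) ≤ 2 * ε / 3) :
      dist p (ofMeasure (μ.map hw.aemeasurable)) < ε := by
    rw [dist_probabilityMeasure_def, ProbabilityMeasure.toMeasure_map]
    calc levyProkhorovDist (μ : Measure X) ((μ : Measure X).map w)
        = levyProkhorovDist ((μ : Measure X).map id) ((μ : Measure X).map w) := by
          rw [Measure.map_id]
      _ ≤ 2 * ε / 3 := levyProkhorovDist_map_le_of_dist_le _ measurable_id hw (by positivity) hxw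
      _ < ε := by linarith
  refine mem_NASensSet_of_le_dist hn (hnear hsnap fun x => (ha x).le.trans (by linarith))
    (hnear hmove fun x => ?_) ?_ (by positivity)
  · by_cases hx : x ∈ S
    · simp only [Set.piecewise_eq_of_mem _ _ _ hx, Function.comp_apply]
      linarith [ha x, hy (jdx x), dist_triangle x (a (jdx x)) (y (jdx x))]
    · simp only [Set.piecewise_eq_of_notMem _ _ _ hx, Function.comp_apply]
      linarith [ha x]
  · rw [dist_probabilityMeasure_def, toMeasure_nacomp_inducedMap, toMeasure_nacomp_inducedMap]
    have hcomp : nacomp f n ∘ S.piecewise (y ∘ jdx) (a ∘ jdx) =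
        S.piecewise (nacomp f n ∘ y ∘ jdx) (nacomp f n ∘ a ∘ jdx) := by
      funext x
      by_cases hx : x ∈ S <;> simp [hx]
    simp only [ProbabilityMeasure.toMeasure_map, Measure.map_map hF hsnap,
      Measure.map_map hF hmove, hcomp]
    exact hsepS

theorem NAMultiSensitive.induced [CompactSpace X] {f : ℕ → X → X}
    (hf : ∀ n, Continuous (f n)) (h : NAMultiSensitive f) :
    NAMultiSensitive fun n => inducedMap (f n) (hf n) := by
  obtain ⟨δ, hδ, hsens⟩ := h
  obtain ⟨K, c, idx, hidx, hc⟩ :=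
    exists_measurable_fin_approx (X := X) (by positivity : 0 < δ / 4)
  refine ⟨min δ 1 / (4 * (K + 1)) / 3, by positivity, fun ε hε k hk p => ?_⟩
  obtain ⟨x₀⟩ := (p ⟨0, hk⟩).toMeasure.nonempty
  obtain ⟨r, a, jdx, hjdx, ha⟩ :=
    exists_measurable_fin_approx (X := X) (by positivity : 0 < ε / 3)
  obtain ⟨n, hn⟩ := hsens (ε / 3) (by positivity) r (jdx x₀).pos a
  choose hn1 y hy hsep using mem_iInter.1 hn
  exact ⟨n, mem_iInter.2 fun i =>
    mem_NASensSet_inducedMap hf hidx hδ hc hjdx hε ha hy (hn1 (jdx x₀)) hsep (p i)⟩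

end Dynamics

/-- `(X, f_{0,∞})` is multi-sensitive iff the induced system `(𝓜(X), f̂_{0,∞})` is
multi-sensitive. -/
theorem multiSensitive_iff_induced
    {X : Type*} [MetricSpace X] [CompactSpace X] [MeasurableSpace X] [BorelSpace X]
    (f : ℕ → X → X) (hf : ∀ n, Continuous (f n)) :
    NAMultiSensitive f ↔ NAMultiSensitive (fun n => inducedMap (f n) (hf n)) :=
  ⟨NAMultiSensitive.induced hf, NAMultiSensitive.of_induced hf⟩
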